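/- Let U, V ∈ ℝ^{N×d} both have orthonormal columns (UᵀU = VᵀV = I_d). Then ‖U − V(VᵀU)‖ ≤ ‖UUᵀ − VVᵀ‖ and ‖U(UᵀV) − V‖ ≤ ‖UUᵀ − VVᵀ‖. -/
import Mathlib

open Matrix Real

noncomputable def specNorm {m n : Type*} [Fintype m] [Fintype n]
    (A : Matrix m n ℝ) : ℝ :=
  sSup {c : ℝ | ∃ x : n → ℝ, (∑ j, (x j) ^ 2) ≤ 1 ∧
    c = Real.sqrt (∑ i, (∑ j, A i j * x j) ^ 2)}

lemma specSet_nonempty {m n : Type*} [Fintype m] [Fintype n] (A : Matrix m n ℝ) :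
    {c : ℝ | ∃ x : n → ℝ, (∑ j, (x j) ^ 2) ≤ 1 ∧
      c = Real.sqrt (∑ i, (∑ j, A i j * x j) ^ 2)}.Nonempty :=
  ⟨_, fun _ => 0, by simp, rfl⟩

lemma specSet_bdd {m n : Type*} [Fintype m] [Fintype n] (A : Matrix m n ℝ) :
    BddAbove {c : ℝ | ∃ x : n → ℝ, (∑ j, (x j) ^ 2) ≤ 1 ∧
      c = Real.sqrt (∑ i, (∑ j, A i j * x j) ^ 2)} := by
  refine ⟨Real.sqrt (∑ i, ∑ j, (A i j) ^ 2), ?_⟩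
  rintro c ⟨x, hx, rfl⟩
  apply Real.sqrt_le_sqrt
  apply Finset.sum_le_sum
  intro i _
  calc (∑ j, A i j * x j) ^ 2 ≤ (∑ j, (A i j)^2) * (∑ j, (x j)^2) :=
        Finset.sum_mul_sq_le_sq_mul_sq Finset.univ _ _
    _ ≤ ∑ j, (A i j)^2 := by
        nlinarith [Finset.sum_nonneg (fun j (_ : j ∈ Finset.univ) => sq_nonneg (A i j))]

-- norm preservation: if WᵀW = 1 then ∑ (W *ᵥ x)² = ∑ x²
lemma sum_sq_mulVec {m n : Type*} [Fintype m] [Fintype n] [DecidableEq n]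
    (W : Matrix m n ℝ) (hW : Wᵀ * W = 1) (x : n → ℝ) :
    (∑ i, ((W *ᵥ x) i) ^ 2) = ∑ j, (x j) ^ 2 := by
  have h1 : (∑ i, ((W *ᵥ x) i) ^ 2) = (W *ᵥ x) ⬝ᵥ (W *ᵥ x) := by
    simp [dotProduct, sq]
  have h2 : (W *ᵥ x) ⬝ᵥ (W *ᵥ x) = x ⬝ᵥ ((Wᵀ * W) *ᵥ x) := by
    rw [← mulVec_mulVec, dotProduct_mulVec, ← mulVec_transpose, dotProduct_comm]
  rw [h1, h2, hW, one_mulVec]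
  simp [dotProduct, sq]

lemma specNorm_mul_le {m n p : Type*} [Fintype m] [Fintype n] [Fintype p] [DecidableEq n]
    (M : Matrix m p ℝ) (W : Matrix p n ℝ) (hW : Wᵀ * W = 1) :
    specNorm (M * W) ≤ specNorm M := by
  apply csSup_le_csSup (specSet_bdd M) (specSet_nonempty _)
  rintro c ⟨x, hx, rfl⟩
  refine ⟨W *ᵥ x, ?_, ?_⟩
  · rw [sum_sq_mulVec W hW x]; exact hx
  · congr 1
    apply Finset.sum_congr rfl
    intro i _
    congr 1
    have : (∑ j, (M * W) i j * x j) = ((M * W) *ᵥ x) i := rfl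
    rw [this, ← mulVec_mulVec]
    rfl

/-- for matrices with orthonormal columns,
`‖U − V(VᵀU)‖ ≤ ‖UUᵀ − VVᵀ‖` and `‖U(UᵀV) − V‖ ≤ ‖UUᵀ − VVᵀ‖`. -/
theorem stmt_16 (N d : ℕ) (hd : 1 ≤ d) (hNd : d ≤ N)
    (U V : Matrix (Fin N) (Fin d) ℝ) (hU : Uᵀ * U = 1) (hV : Vᵀ * V = 1) :
    specNorm (U - V * (Vᵀ * U)) ≤ specNorm (U * Uᵀ - V * Vᵀ) ∧
    specNorm (U * (Uᵀ * V) - V) ≤ specNorm (U * Uᵀ - V * Vᵀ) := by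
  constructor
  · have h : U - V * (Vᵀ * U) = (U * Uᵀ - V * Vᵀ) * U := by
      rw [Matrix.sub_mul, Matrix.mul_assoc, Matrix.mul_assoc, hU, Matrix.mul_one]
    rw [h]; exact specNorm_mul_le _ U hU
  · have h : U * (Uᵀ * V) - V = (U * Uᵀ - V * Vᵀ) * V := by
      rw [Matrix.sub_mul, Matrix.mul_assoc, Matrix.mul_assoc, hV, Matrix.mul_one]
    rw [h]; exact specNorm_mul_le _ V hV
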